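/- arXiv:2111.12489 — 2 statements merged into one kernel-verified Lean document; each statement's English description precedes it below -/
import Mathlib

section
/- Let p be an odd prime, m ≥ 1, s ≥ 1, and let λ_0 = δ^2 be a nonzero square in F_{p^m}. Then the code C_{0,p^s}(2p^s, λ_0) is a linear code over F_{p^m} of length 2p^s, dimension p^s, minimum distance 2, and minimum locality 1; in particular it is an optimal LRC, i.e., 2 = 2p^s − p^s − ⌈p^s/1⌉ + 2. -/
open Polynomial

variable {F : Type} [Field F] [Fintype F] [DecidableEq F]

/-- `d` is the minimum distance (minimum Hamming weight of a nonzero codeword) of `Cset`. -/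
def minDistIs {n : ℕ} (Cset : Set (Fin n → F)) (d : ℕ) : Prop :=
  IsLeast {w : ℕ | ∃ c ∈ Cset, c ≠ 0 ∧ hammingNorm c = w} d

/-- The `i`-th code symbol of `Cset` has locality `r`. -/
def symbolLocality {n : ℕ} (Cset : Set (Fin n → F)) (i : Fin n) (r : ℕ) : Prop :=
  ∃ I : Finset (Fin n), i ∉ I ∧ I.card ≤ r ∧
    ∃ f : ({x : Fin n // x ∈ I} → F) → F, ∀ c ∈ Cset, c i = f (fun j => c j.1)

/-- `Cset` has all-symbol locality `r`. -/
def hasAllSymbolLocality {n : ℕ} (Cset : Set (Fin n → F)) (r : ℕ) : Prop :=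
  ∀ i : Fin n, symbolLocality Cset i r

/-- `r` is the minimum locality of `Cset`. -/
def minLocalityIs {n : ℕ} (Cset : Set (Fin n → F)) (r : ℕ) : Prop :=
  IsLeast {r' : ℕ | hasAllSymbolLocality Cset r'} r

/-- The λ-constacyclic code of length `n` corresponding to the ideal generated by (the image of)
`g` in `F[x]/⟨x^n − λ⟩`, viewed as a set of vectors via the coefficient identification. -/
def codeOfGen (n : ℕ) (lam : F) (g : F[X]) : Set (Fin n → F) :=
  {c | (∑ j : Fin n, Polynomial.C (c j) * X ^ (j : ℕ)) ∈ Ideal.span {g, X ^ n - Polynomial.C lam}}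

/-- The code `C_i(η, p^s, λ₀)`: the λ-constacyclic code of length `η p^s`
generated by `(x^η − λ₀)^i`, where `λ = λ₀^{p^s}`. -/
def Ci (p η s i : ℕ) (lam0 : F) : Set (Fin (η * p ^ s) → F) :=
  codeOfGen (η * p ^ s) (lam0 ^ p ^ s) ((X ^ η - Polynomial.C lam0) ^ i)

/-- The code `C_{i,j}(2p^s, λ₀)` with `λ₀ = δ²`: the λ-constacyclic code of length `2 p^s`
generated by `(x − δ)^i (x + δ)^j`, where `λ = λ₀^{p^s}`. -/
def Cij (p s i j : ℕ) (δ : F) : Set (Fin (2 * p ^ s) → F) :=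
  codeOfGen (2 * p ^ s) ((δ ^ 2) ^ p ^ s) ((X - Polynomial.C δ) ^ i * (X + Polynomial.C δ) ^ j)

/-- `V_t = Π_j (t_j + 1)` over the base-`p` digits `t_j` of `t`. -/
def Vdig (p t : ℕ) : ℕ := ((Nat.digits p t).map (· + 1)).prod

/-- Ceiling division `⌈a / b⌉` of natural numbers. -/
def nceil (a b : ℕ) : ℕ := (a + b - 1) / b

/-- `Cset` is an optimal LRC: for its dimension `k`, minimum distance `d` and minimum
locality `r`, the Singleton-like bound `d = n − k − ⌈k/r⌉ + 2` is met with equality. -/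
def optimalLRC {n : ℕ} (Cset : Set (Fin n → F)) : Prop :=
  ∃ k d r : ℕ, Nat.card Cset = Fintype.card F ^ k ∧ minDistIs Cset d ∧
    minLocalityIs Cset r ∧ (d : ℤ) = (n : ℤ) - (k : ℤ) - (nceil k r : ℤ) + 2

/-! ### Auxiliary material -/

/-- Extension of a `Fin n`-indexed vector to `ℕ` by zero. -/
def extFn {F : Type} [Field F] {n : ℕ} (c : Fin n → F) : ℕ → F :=
  fun j => if h : j < n then c ⟨j, h⟩ else 0

lemma extFn_mk {F : Type} [Field F] {n : ℕ} (c : Fin n → F) {j : ℕ} (h : j < n) :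
    extFn c j = c ⟨j, h⟩ := dif_pos h

lemma extFn_val {F : Type} [Field F] {n : ℕ} (c : Fin n → F) (j : Fin n) :
    extFn c (j : ℕ) = c j := by
  rw [extFn_mk c j.isLt]

/-- The polynomial with coefficients `c 0, …, c (n-1)`. -/
noncomputable def polyOf {F : Type} [Field F] (n : ℕ) (c : ℕ → F) : F[X] :=
  ∑ j ∈ Finset.range n, Polynomial.C (c j) * X ^ j

lemma polyOf_coeff {F : Type} [Field F] (n : ℕ) (c : ℕ → F) (k : ℕ) :
    (polyOf n c).coeff k = if k < n then c k else 0 := by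
  simp only [polyOf, Polynomial.finset_sum_coeff, Polynomial.coeff_C_mul,
    Polynomial.coeff_X_pow, mul_ite, mul_one, mul_zero]
  rw [Finset.sum_ite_eq (Finset.range n) k c]
  simp [Finset.mem_range]

lemma dvd_iff_rel {F : Type} [Field F] (N : ℕ) (hN : 0 < N) (a : F) (c : ℕ → F) :
    ((X ^ N + Polynomial.C a) ∣ polyOf (N + N) c) ↔ ∀ j < N, c j = a * c (N + j) := by
  have hAB : polyOf (N + N) c = polyOf N c + X ^ N * polyOf N (fun j => c (N + j)) := by
    simp only [polyOf]
    rw [Finset.sum_range_add, Finset.mul_sum]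
    congr 1
    apply Finset.sum_congr rfl
    intro j hj
    rw [pow_add]; ring
  constructor
  · rintro ⟨q, hq⟩
    have hdvd : (X ^ N + Polynomial.C a) ∣
        (polyOf N c - Polynomial.C a * polyOf N (fun j => c (N + j))) := by
      refine ⟨q - polyOf N (fun j => c (N + j)), ?_⟩
      linear_combination hq - hAB
    have hz : polyOf N c - Polynomial.C a * polyOf N (fun j => c (N + j)) = 0 := by
      refine Polynomial.eq_zero_of_dvd_of_degree_lt hdvd ?_
      rw [Polynomial.degree_X_pow_add_C hN, Polynomial.degree_lt_iff_coeff_zero]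
      intro k hk
      have hk' : ¬ k < N := by exact_mod_cast Nat.not_lt.2 (by exact_mod_cast hk)
      rw [Polynomial.coeff_sub, Polynomial.coeff_C_mul, polyOf_coeff, polyOf_coeff,
        if_neg hk', if_neg hk']
      ring
    intro j hj
    have := congrArg (fun f => f.coeff j) hz
    simp only [Polynomial.coeff_sub, Polynomial.coeff_C_mul, polyOf_coeff, if_pos hj,
      Polynomial.coeff_zero] at this
    exact sub_eq_zero.mp this
  · intro h
    refine ⟨polyOf N (fun j => c (N + j)), ?_⟩
    have hA : polyOf N c = Polynomial.C a * polyOf N (fun j => c (N + j)) := by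
      rw [polyOf, polyOf, Finset.mul_sum]
      apply Finset.sum_congr rfl
      intro j hj
      rw [← mul_assoc, ← Polynomial.C_mul, ← h j (Finset.mem_range.mp hj)]
    rw [hAB, hA]; ring

lemma code_eq {p m : ℕ} (hp : p.Prime) (hm : 1 ≤ m)
    {F : Type} [Field F] [Fintype F] [DecidableEq F] (hcard : Fintype.card F = p ^ m)
    (s : ℕ) (δ : F) :
    Cij p s 0 (p ^ s) δ =
      {c : Fin (2 * p ^ s) → F |
        ∀ j < p ^ s, extFn c j = δ ^ p ^ s * extFn c (p ^ s + j)} := by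
  haveI : Fact p.Prime := ⟨hp⟩
  haveI hcharF : CharP F p := by
    haveI := ringChar.charP F
    obtain ⟨n, hq0, hcard'⟩ := FiniteField.card F (ringChar F)
    have hdvd : p ∣ (ringChar F) ^ (n : ℕ) := by
      rw [← hcard', hcard]
      exact dvd_pow_self p (by omega)
    have hpq : p = ringChar F :=
      (Nat.prime_dvd_prime_iff_eq hp hq0).mp (hp.dvd_of_dvd_pow hdvd)
    rw [hpq]
    exact ringChar.charP F
  have hN : 0 < p ^ s := pow_pos hp.pos s
  have hg : ((X : F[X]) - C δ) ^ 0 * ((X : F[X]) + C δ) ^ (p ^ s)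
      = X ^ (p ^ s) + C (δ ^ p ^ s) := by
    rw [pow_zero, one_mul, add_pow_char_pow, map_pow]
  have hfac : (X : F[X]) ^ (2 * p ^ s) - C ((δ ^ 2) ^ p ^ s)
      = (X ^ (p ^ s) + C (δ ^ p ^ s)) * (X ^ (p ^ s) - C (δ ^ p ^ s)) := by
    have h1 : ((δ : F) ^ 2) ^ p ^ s = (δ ^ p ^ s) ^ 2 := by
      rw [← pow_mul, ← pow_mul, mul_comm]
    rw [h1, show 2 * p ^ s = p ^ s * 2 from mul_comm 2 (p ^ s), pow_mul, map_pow]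
    ring
  have hspan : Ideal.span ({X ^ (p ^ s) + C (δ ^ p ^ s),
        X ^ (2 * p ^ s) - C ((δ ^ 2) ^ p ^ s)} : Set F[X])
      = Ideal.span {X ^ (p ^ s) + C (δ ^ p ^ s)} := by
    apply le_antisymm
    · rw [Ideal.span_le]
      rintro x hx
      simp only [Set.mem_insert_iff, Set.mem_singleton_iff] at hx
      rcases hx with rfl | rfl
      · exact Ideal.subset_span rfl
      · rw [SetLike.mem_coe, Ideal.mem_span_singleton]
        exact ⟨X ^ (p ^ s) - C (δ ^ p ^ s), hfac⟩
    · exact Ideal.span_mono (Set.singleton_subset_iff.mpr (Set.mem_insert _ _))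
  ext c
  have hsum : (∑ j : Fin (2 * p ^ s), C (c j) * X ^ (j : ℕ))
      = polyOf (p ^ s + p ^ s) (extFn c) := by
    rw [polyOf, show p ^ s + p ^ s = 2 * p ^ s from (two_mul _).symm,
      ← Fin.sum_univ_eq_sum_range]
    apply Finset.sum_congr rfl
    intro j _
    rw [extFn_val]
  simp only [Cij, codeOfGen, Set.mem_setOf_eq, hg, hspan, Ideal.mem_span_singleton, hsum,
    dvd_iff_rel (p ^ s) hN (δ ^ p ^ s) (extFn c)]

lemma hamming_two {F : Type} [Field F] [DecidableEq F] {n : ℕ} (c : Fin n → F)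
    (u v : Fin n) (huv : u ≠ v) (hu : c u ≠ 0) (hv : c v ≠ 0) : 2 ≤ hammingNorm c := by
  simp only [hammingNorm]
  exact Finset.one_lt_card.mpr ⟨u, by simp [hu], v, by simp [hv], huv⟩

/-- For odd prime `p`, `s ≥ 1` and `λ₀ = δ²` a nonzero square, the code
`C_{0,p^s}(2p^s, λ₀)` has length `2p^s`, dimension `p^s`, minimum distance `2` and minimum
locality `1`; in particular it is an optimal LRC. -/
theorem stmt10 {p m : ℕ} (hp : p.Prime) (hp2 : p ≠ 2) (hm : 1 ≤ m)
    {F : Type} [Field F] [Fintype F] [DecidableEq F] (hcard : Fintype.card F = p ^ m)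
    (s : ℕ) (hs : 1 ≤ s) (δ : F) (hδ : δ ≠ 0) :
    Nat.card (Cij p s 0 (p ^ s) δ) = (p ^ m) ^ (p ^ s) ∧
    minDistIs (Cij p s 0 (p ^ s) δ) 2 ∧
    minLocalityIs (Cij p s 0 (p ^ s) δ) 1 ∧
    (2 : ℤ) = ((2 * p ^ s : ℕ) : ℤ) - (p ^ s : ℤ) - (nceil (p ^ s) 1 : ℤ) + 2 := by
  have hN : 0 < p ^ s := pow_pos hp.pos s
  set N := p ^ s with hNdef
  set a : F := δ ^ N with ha_def
  have ha : a ≠ 0 := pow_ne_zero _ hδ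
  have hCS := code_eq hp hm hcard s δ
  rw [hCS]
  set S : Set (Fin (2 * N) → F) :=
    {c : Fin (2 * N) → F | ∀ j < N, extFn c j = a * extFn c (N + j)} with hSdef
  -- the weight-2 codeword
  set c2 : Fin (2 * N) → F :=
    fun i => if (i : ℕ) = 0 then a else if (i : ℕ) = N then 1 else 0 with hc2def
  have hc2S : c2 ∈ S := by
    intro j hj
    rw [extFn_mk c2 (show j < 2 * N by omega), extFn_mk c2 (show N + j < 2 * N by omega)]
    show (if j = 0 then a else if j = N then 1 else 0)
      = a * (if N + j = 0 then a else if N + j = N then 1 else 0)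
    rcases eq_or_ne j 0 with rfl | hj0
    · simp [hN.ne']
    · rw [if_neg hj0, if_neg (by omega), if_neg (by omega), if_neg (by omega)]
      ring
  have h0S : (0 : Fin (2 * N) → F) ∈ S := by
    intro j hj
    simp [extFn]
  refine ⟨?_, ⟨?_, ?_⟩, ⟨?_, ?_⟩, ?_⟩
  · -- cardinality
    have e : S ≃ (Fin N → F) :=
      { toFun := fun c j => c.1 ⟨N + (j : ℕ), by omega⟩
        invFun := fun b =>
          ⟨fun i => if h : (i : ℕ) < N then a * b ⟨(i : ℕ), h⟩ else b ⟨(i : ℕ) - N, by omega⟩,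
            by
              intro j hj
              rw [extFn_mk _ (show j < 2 * N by omega), extFn_mk _ (show N + j < 2 * N by omega)]
              show (if h : j < N then a * b ⟨j, h⟩ else b ⟨j - N, _⟩)
                = a * (if h : N + j < N then a * b ⟨N + j, h⟩ else b ⟨N + j - N, _⟩)
              rw [dif_pos hj, dif_neg (by omega)]
              congr 1
              exact congrArg b (Fin.ext (show j = N + j - N by omega))⟩
        left_inv := by
          rintro ⟨c, hc⟩
          apply Subtype.ext
          funext i
          show (if h : (i : ℕ) < N then a * c ⟨N + ((i : ℕ)), by omega⟩
              else c ⟨N + ((i : ℕ) - N), by omega⟩) = c i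
          by_cases h : (i : ℕ) < N
          · rw [dif_pos h]
            have := hc (i : ℕ) h
            rw [extFn_mk c (show (i : ℕ) < 2 * N by omega),
              extFn_mk c (show N + (i : ℕ) < 2 * N by omega)] at this
            rw [← this]
          · rw [dif_neg h]
            exact congrArg c (Fin.ext (show N + ((i : ℕ) - N) = (i : ℕ) by omega))
        right_inv := by
          intro b
          funext j
          show (if h : ((⟨N + (j : ℕ), by omega⟩ : Fin (2 * N)) : ℕ) < N
              then a * b ⟨_, h⟩ else b ⟨N + (j : ℕ) - N, by omega⟩) = b j
          rw [dif_neg (show ¬ N + (j : ℕ) < N by omega)]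
          exact congrArg b (Fin.ext (show N + (j : ℕ) - N = (j : ℕ) by omega)) }
    rw [Nat.card_congr e, Nat.card_fun, Nat.card_eq_fintype_card, Nat.card_eq_fintype_card,
      Fintype.card_fin, hcard]
  · -- distance 2 is attained
    refine ⟨c2, hc2S, ?_, ?_⟩
    · intro h
      have : c2 ⟨0, by omega⟩ = 0 := by rw [h]; rfl
      rw [show c2 ⟨0, by omega⟩ = a from if_pos rfl] at this
      exact ha this
    · have hfilter : ({i | c2 i ≠ 0} : Finset (Fin (2 * N)))
          = {⟨0, by omega⟩, ⟨N, by omega⟩} := by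
        ext i
        simp only [Finset.mem_filter, Finset.mem_univ, true_and, Finset.mem_insert,
          Finset.mem_singleton, Fin.ext_iff]
        show (if (i : ℕ) = 0 then a else if (i : ℕ) = N then 1 else 0) ≠ 0 ↔ _
        split_ifs with h0 hN'
        · simp [ha, h0]
        · simp [hN', h0]
        · simp [h0, hN']
      simp only [hammingNorm, hfilter]
      convert Finset.card_pair (a := (⟨0, by omega⟩ : Fin (2 * N))) (b := ⟨N, by omega⟩)
        (by simp [Fin.ext_iff]; omega) using 2
  · -- distance lower bound
    rintro w ⟨c, hcS, hc0, rfl⟩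
    obtain ⟨i, hi⟩ : ∃ i, c i ≠ 0 := by
      by_contra h
      push_neg at h
      exact hc0 (funext h)
    obtain ⟨j, hjN, hj0⟩ : ∃ j : Fin (2 * N), N ≤ (j : ℕ) ∧ c j ≠ 0 := by
      by_cases hiN : (i : ℕ) < N
      · have := hcS (i : ℕ) hiN
        rw [extFn_val, extFn_mk c (show N + (i : ℕ) < 2 * N by omega)] at this
        refine ⟨⟨N + (i : ℕ), by omega⟩, by simp, ?_⟩
        intro h
        apply hi
        rw [this, h, mul_zero]
      · exact ⟨i, by omega, hi⟩
    have hrel := hcS ((j : ℕ) - N) (by omega)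
    rw [show N + ((j : ℕ) - N) = (j : ℕ) by omega, extFn_val,
      extFn_mk c (show (j : ℕ) - N < 2 * N by omega)] at hrel
    refine hamming_two c ⟨(j : ℕ) - N, by omega⟩ j ?_ ?_ hj0
    · intro h
      rw [Fin.ext_iff] at h
      simp at h
      omega
    · rw [hrel]
      exact mul_ne_zero ha hj0
  · -- locality 1 attained
    intro i
    by_cases h : (i : ℕ) < N
    · refine ⟨{⟨N + (i : ℕ), by omega⟩}, ?_, by simp,
        fun g => a * g ⟨⟨N + (i : ℕ), by omega⟩, Finset.mem_singleton_self _⟩, ?_⟩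
      · simp [Fin.ext_iff]
        omega
      · intro c hc
        have := hc (i : ℕ) h
        rw [extFn_val, extFn_mk c (show N + (i : ℕ) < 2 * N by omega)] at this
        exact this
    · refine ⟨{⟨(i : ℕ) - N, by omega⟩}, ?_, by simp,
        fun g => a⁻¹ * g ⟨⟨(i : ℕ) - N, by omega⟩, Finset.mem_singleton_self _⟩, ?_⟩
      · simp [Fin.ext_iff]
        omega
      · intro c hc
        have := hc ((i : ℕ) - N) (by omega)
        rw [show N + ((i : ℕ) - N) = (i : ℕ) by omega, extFn_val,
          extFn_mk c (show (i : ℕ) - N < 2 * N by omega)] at this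
        show c i = a⁻¹ * c ⟨(i : ℕ) - N, by omega⟩
        rw [this, inv_mul_cancel_left₀ ha]
  · -- locality lower bound
    intro r' hr'
    by_contra hcon
    have hr0 : r' = 0 := by omega
    subst hr0
    obtain ⟨I, hiI, hcard0, f, hf⟩ := hr' ⟨0, by omega⟩
    have hIempty : I = ∅ := Finset.card_eq_zero.mp (Nat.le_zero.mp hcard0)
    subst hIempty
    have hargs : (fun j : {x : Fin (2 * N) // x ∈ (∅ : Finset (Fin (2 * N)))} =>
        (0 : Fin (2 * N) → F) j.1) = fun j => c2 j.1 :=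
      funext fun j => absurd j.2 (Finset.notMem_empty _)
    have h1 := hf 0 h0S
    have h2 := hf c2 hc2S
    rw [hargs] at h1
    rw [← h2] at h1
    have : (0 : F) = a := by
      rw [show c2 ⟨0, by omega⟩ = a from if_pos rfl] at h1
      exact h1
    exact ha this.symm
  · -- arithmetic
    show (2 : ℤ) = ((2 * p ^ s : ℕ) : ℤ) - (p : ℤ) ^ s - (nceil (p ^ s) 1 : ℤ) + 2
    have h1 : nceil (p ^ s) 1 = p ^ s := by simp [nceil]
    rw [h1]
    push_cast
    ring
end

section
/- Let p be a prime, m ≥ 1, s ≥ 2, η a positive integer coprime to p, λ_0 a nonzero element of F_{p^m} such that x^η − λ_0 is irreducible over F_{p^m}, and let p^s − p^{s−1} + 1 ≤ i ≤ p^s − 1. If the code C_i(η, p^s, λ_0) is an optimal LRC, then η = 1 and either p = 2 and i = 2^{s−1} + 1, or i = p^s − 1. -/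
/-!
Write `j = p^s - i`, so that `1 ≤ j < p^(s-1)` and the code has dimension `ηj`. In characteristic
`p`, `(x^η - λ₀)^(p^(s-1)) = x^(ηp^(s-1)) - λ₀^(p^(s-1))` and `i ≥ p^s - p^(s-1)`, so every codeword
satisfies `c_a = λ₀^(p^(s-1)) c_(a + ηp^(s-1))`: each symbol is a fixed multiple of another one, the
minimum locality is `1`, and optimality forces `d = η(p^s - 2j) + 2`.

On the other hand, write `p^L u ≤ j < p^L (u + 1)` with `1 ≤ u < p` and `L + k = s - 1`. With
`y = x^(ηp^L)` and `ν = λ₀^(p^L)`, the codeword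
`(x^η - λ₀)^(p^s - p^L u) = (y - ν)^(p-u) (y^p - ν^p)^(p^k - 1)` has weight at most `(p - u + 1) p^k`.
Comparing this with `d`, the slack splits into nonnegative terms which must all vanish, leaving only
`η = 1` together with `j = 1`, or `p = 2` and `j = 2^(s-1) - 1`.
-/

open Polynomial

variable {F : Type} [Field F] [Fintype F] [DecidableEq F]

namespace Polynomial

section Semiring

variable {R : Type*} [Semiring R]

theorem ofFn_toFn_of_degree_lt [DecidableEq R] {n : ℕ} {P : R[X]} (h : P.degree < n) :
    ofFn n (toFn n P) = P := by
  ext i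
  by_cases hi : i < n
  · simp [hi, toFn]
  · rw [ofFn_coeff_eq_zero_of_ge _ (not_lt.1 hi),
      coeff_eq_zero_of_degree_lt (h.trans_le (by exact_mod_cast not_lt.1 hi))]

theorem hammingNorm_toFn_le [DecidableEq R] (n : ℕ) (P : R[X]) :
    hammingNorm (toFn n P) ≤ P.support.card :=
  Finset.card_le_card_of_injOn Fin.val
    (fun i hi => by simpa [toFn] using (Finset.mem_filter.1 (Finset.mem_coe.1 hi)).2)
    Fin.val_injective.injOn

end Semiring

section CommRing

variable {R : Type*} [CommRing R]

theorem card_support_expand_le {D : ℕ} (hD : 0 < D) (f : R[X]) :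
    (expand R D f).support.card ≤ f.support.card := by
  classical
  refine (Finset.card_le_card fun a ha => ?_).trans (f.support.card_image_le (f := (· * D)))
  rw [mem_support_iff, coeff_expand hD] at ha
  split_ifs at ha with hdvd
  · exact Finset.mem_image.2 ⟨a / D, mem_support_iff.2 ha, Nat.div_mul_cancel hdvd⟩
  · exact absurd rfl ha

theorem card_support_X_pow_sub_C_pow_le (D N : ℕ) (w : R) :
    ((X ^ D - C w) ^ N).support.card ≤ N + 1 := by
  rcases D.eq_zero_or_pos with rfl | hD
  · rw [pow_zero, ← C_1, ← C_sub, ← C_pow]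
    exact (Finset.card_le_card (support_C_subset _)).trans (by simp)
  · have : (X ^ D - C w) ^ N = expand R D ((X - C w) ^ N) := by simp
    rw [this]
    refine (card_support_expand_le hD _).trans ((card_supp_le_succ_natDegree _).trans ?_)
    exact Nat.succ_le_succ <|
      (natDegree_pow_le_of_le N (natDegree_X_sub_C_le w)).trans_eq (mul_one N)

theorem X_pow_sub_C_pow_char_pow {p : ℕ} [Fact p.Prime] [CharP R p] (η t : ℕ) (a : R) :
    (X ^ η - C a) ^ p ^ t = X ^ (η * p ^ t) - C (a ^ p ^ t) := by
  rw [sub_pow_char_pow, ← pow_mul, ← C_pow]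

theorem pow_dvd_X_pow_sub_C_of_le {p : ℕ} [Fact p.Prime] [CharP R p] {η i s : ℕ} {a : R}
    (hi : i ≤ p ^ s) : (X ^ η - C a) ^ i ∣ X ^ (η * p ^ s) - C (a ^ p ^ s) :=
  X_pow_sub_C_pow_char_pow (p := p) η s a ▸ pow_dvd_pow _ hi

theorem card_support_X_pow_sub_C_pow_add_mul_le {p : ℕ} [Fact p.Prime] [CharP R p]
    (D a b : ℕ) (w : R) :
    ((X ^ D - C w) ^ (a + p * b)).support.card ≤ (a + 1) * (b + 1) := by
  rw [pow_add, pow_mul, ← pow_one p, sub_pow_char_pow, pow_one, ← pow_mul, ← C_pow]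
  exact card_support_mul_le.trans (Nat.mul_le_mul (card_support_X_pow_sub_C_pow_le _ _ _)
    (card_support_X_pow_sub_C_pow_le _ _ _))

end CommRing

section Field

variable {K : Type*} [Field K]

theorem degree_mul_lt_iff_of_monic {g q : K[X]} (hg : g.Monic) (D : ℕ) :
    (q * g).degree < (D + g.natDegree : ℕ) ↔ q.degree < D := by
  rcases eq_or_ne q 0 with rfl | hq
  · simp
  rw [degree_mul, degree_eq_natDegree hq, degree_eq_natDegree hg.ne_zero]
  norm_cast
  omega

theorem coeff_eq_mul_coeff_add_of_dvd {n M : ℕ} (hM : 0 < M) {lam μ : K} {P : K[X]}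
    (hP : P.degree < n) (hdvd : X ^ n - C lam ∣ (X ^ M - C μ) * P) {a : ℕ} (ha : a + M < n) :
    P.coeff a = μ * P.coeff (a + M) := by
  obtain ⟨Q, hQ⟩ := hdvd
  have hQa : Q.coeff (a + M) = 0 := by
    rcases eq_or_ne Q 0 with rfl | hQ0
    · simp
    have hP0 : P ≠ 0 := by
      rintro rfl
      simp [X_pow_sub_C_ne_zero (by omega : 0 < n), hQ0] at hQ
    have := congrArg natDegree hQ
    rw [natDegree_mul (X_pow_sub_C_ne_zero hM μ) hP0,
      natDegree_mul (X_pow_sub_C_ne_zero (by omega) lam) hQ0, natDegree_X_pow_sub_C,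
      natDegree_X_pow_sub_C] at this
    have := (natDegree_lt_iff_degree_lt hP0).2 hP
    exact coeff_eq_zero_of_natDegree_lt (by omega)
  have := congrArg (coeff · (a + M)) hQ
  simp only [sub_mul, coeff_sub, coeff_X_pow_mul', coeff_C_mul, hQa] at this
  rw [if_pos (by omega), if_neg (by omega), Nat.add_sub_cancel] at this
  linear_combination this

end Field

end Polynomial

section Codes

variable {K : Type} [Field K]

theorem mem_codeOfGen_iff [DecidableEq K] {n : ℕ} {lam : K} {g : K[X]}
    (hdvd : g ∣ X ^ n - C lam) (c : Fin n → K) :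
    c ∈ codeOfGen n lam g ↔ g ∣ ofFn n c := by
  have hspan : Ideal.span {g, X ^ n - C lam} = Ideal.span {g} := by
    rw [Ideal.span_insert, sup_eq_left, Ideal.span_le, Set.singleton_subset_iff]
    exact Ideal.mem_span_singleton.2 hdvd
  simp only [codeOfGen, Set.mem_ofPred_eq, hspan, Ideal.mem_span_singleton, ofFn_eq_sum_monomial,
    C_mul_X_pow_eq_monomial]

theorem zero_mem_codeOfGen (n : ℕ) (lam : K) (g : K[X]) :
    (0 : Fin n → K) ∈ codeOfGen n lam g := by
  simp [codeOfGen]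

theorem card_codeOfGen [Fintype K] {n : ℕ} {lam : K} {g : K[X]} (hg : g.Monic)
    (hdvd : g ∣ X ^ n - C lam) (hdeg : g.natDegree ≤ n) :
    Nat.card (codeOfGen n lam g) = Fintype.card K ^ (n - g.natDegree) := by
  classical
  set D := n - g.natDegree
  have hn : n = D + g.natDegree := by omega
  let φ : (Fin D → K) → Fin n → K := fun a => toFn n (ofFn D a * g)
  have hφ : ∀ a, ofFn n (φ a) = ofFn D a * g := fun a =>
    ofFn_toFn_of_degree_lt (hn ▸ (degree_mul_lt_iff_of_monic hg D).2 (ofFn_degree_lt a))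
  have hinj : Function.Injective φ := fun a b hab => by
    have := congrArg (ofFn n) hab
    rw [hφ, hφ] at this
    exact injective_ofFn D (mul_right_cancel₀ hg.ne_zero this)
  have hrange : Set.range φ = codeOfGen n lam g := by
    ext c
    rw [mem_codeOfGen_iff hdvd]
    constructor
    · rintro ⟨a, rfl⟩
      exact hφ a ▸ dvd_mul_left g _
    · rintro ⟨q, hq⟩
      have hqD : q.degree < D := by
        rw [← degree_mul_lt_iff_of_monic hg, ← hn, mul_comm, ← hq]
        exact ofFn_degree_lt c
      refine ⟨toFn D q, injective_ofFn n ?_⟩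
      rw [hφ, ofFn_toFn_of_degree_lt hqD, mul_comm, hq]
  rw [← hrange, Nat.card_range_of_injective hinj, Nat.card_eq_fintype_card, Fintype.card_fun,
    Fintype.card_fin]

end Codes

section Locality

variable {K : Type} {n : ℕ}

theorem hasAllSymbolLocality_one_of_forall_exists_eq_mul [Mul K] {C : Set (Fin n → K)}
    (h : ∀ a, ∃ b ≠ a, ∃ κ : K, ∀ c ∈ C, c a = κ * c b) :
    hasAllSymbolLocality C 1 := by
  intro a
  obtain ⟨b, hba, κ, hκ⟩ := h a
  exact ⟨{b}, by simpa using hba.symm, by simp,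
    fun v => κ * v ⟨b, Finset.mem_singleton_self b⟩, hκ⟩

theorem eq_zero_of_hasAllSymbolLocality_zero [Zero K] {C : Set (Fin n → K)}
    (hC : hasAllSymbolLocality C 0) (h0 : 0 ∈ C) {c : Fin n → K} (hc : c ∈ C) : c = 0 := by
  funext a
  obtain ⟨I, -, hI, f, hf⟩ := hC a
  obtain rfl : I = ∅ := Finset.card_eq_zero.1 (Nat.le_zero.1 hI)
  rw [hf c hc, hf 0 h0]
  exact congrArg f (funext fun j => absurd j.2 (Finset.notMem_empty _))

theorem minLocalityIs_one_of_hasAllSymbolLocality_one [Zero K] [Mul K]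
    {C : Set (Fin n → K)} (hC : hasAllSymbolLocality C 1) (h0 : 0 ∈ C) {c : Fin n → K} (hc : c ∈ C) (hc0 : c ≠ 0) :
    minLocalityIs C 1 := by
  refine ⟨hC, fun r hr => Nat.one_le_iff_ne_zero.2 ?_⟩
  rintro rfl
  exact hc0 (eq_zero_of_hasAllSymbolLocality_zero hr h0 hc)

theorem apply_eq_pow_mul_apply_of_add_mul_eq [Monoid K] {C : Set (Fin n → K)} {M : ℕ} {μ : K}
    (hC : ∀ c ∈ C, ∀ a b : Fin n, (a : ℕ) + M = b → c a = μ * c b) {c : Fin n → K}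
    (hc : c ∈ C) :
    ∀ t : ℕ, ∀ a b : Fin n, (a : ℕ) + t * M = b → c a = μ ^ t * c b := by
  intro t
  induction t with
  | zero => intro a b hab; simp [Fin.ext (by simpa using hab)]
  | succ t ih =>
    intro a b hab
    rw [Nat.succ_mul] at hab
    rw [hC c hc a ⟨a + M, by omega⟩ rfl, ih _ b (by simp only; omega), pow_succ', mul_assoc]

theorem hasAllSymbolLocality_one_of_apply_eq_mul_apply_add [GroupWithZero K]
    {C : Set (Fin n → K)} {M N : ℕ} (hn : n = N * M) (hN : 2 ≤ N) (hM : 0 < M) {μ : K}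
    (hμ : μ ≠ 0)
    (hC : ∀ c ∈ C, ∀ a b : Fin n, (a : ℕ) + M = b → c a = μ * c b) :
    hasAllSymbolLocality C 1 := by
  have hNM : M ≤ (N - 1) * M := Nat.le_mul_of_pos_left M (by omega)
  have hsplit : (N - 1) * M + M = n := by
    rw [hn, ← Nat.succ_mul, Nat.succ_eq_add_one, Nat.sub_add_cancel (by omega)]
  refine hasAllSymbolLocality_one_of_forall_exists_eq_mul fun a => ?_
  by_cases ha : (a : ℕ) + M < n
  · exact ⟨⟨a + M, ha⟩, by simp [Fin.ext_iff]; omega, μ, fun c hc => hC c hc a _ rfl⟩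
  · refine ⟨⟨a - (N - 1) * M, by omega⟩, by simp [Fin.ext_iff]; omega, (μ ^ (N - 1))⁻¹,
      fun c hc => ?_⟩
    -- near the end, go back `(N - 1) * M` places and shift forward `N - 1` times
    rw [apply_eq_pow_mul_apply_of_add_mul_eq hC hc (N - 1) ⟨a - (N - 1) * M, by omega⟩ a
      (by simp; omega), inv_mul_cancel_left₀ (pow_ne_zero _ hμ)]

end Locality

section ConstacyclicCode

variable {K : Type} [Field K] {p : ℕ} [hp : Fact p.Prime] [CharP K p] {η s i : ℕ} {a : K}

theorem card_Ci [Fintype K] (hη : 0 < η) (hi : i ≤ p ^ s) :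
    Nat.card (Ci p η s i a) = Fintype.card K ^ (η * (p ^ s - i)) := by
  have hdeg : ((X ^ η - C a) ^ i).natDegree = η * i := by
    rw [natDegree_pow, natDegree_X_pow_sub_C, mul_comm]
  rw [Ci, card_codeOfGen ((monic_X_pow_sub_C a hη.ne').pow i) (pow_dvd_X_pow_sub_C_of_le hi)
    (hdeg ▸ Nat.mul_le_mul_left η hi), hdeg, Nat.mul_sub]

theorem apply_eq_mul_apply_add_of_mem_Ci (hi : p ^ (s + 1) ≤ p ^ s + i)
    (hi' : i ≤ p ^ (s + 1)) :
    ∀ c ∈ Ci p η (s + 1) i a, ∀ x y : Fin (η * p ^ (s + 1)),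
      (x : ℕ) + η * p ^ s = y → c x = a ^ p ^ s * c y := by
  classical
  intro c hc x y hxy
  rw [Ci, mem_codeOfGen_iff (pow_dvd_X_pow_sub_C_of_le hi')] at hc
  have hdvd : X ^ (η * p ^ (s + 1)) - C (a ^ p ^ (s + 1)) ∣
      (X ^ (η * p ^ s) - C (a ^ p ^ s)) * ofFn _ c := by
    rw [← X_pow_sub_C_pow_char_pow, ← X_pow_sub_C_pow_char_pow]
    exact (pow_dvd_pow _ hi).trans (pow_add (X ^ η - C a) _ i ▸ mul_dvd_mul_left _ hc)
  have hη : 0 < η := Nat.pos_of_mul_pos_right x.pos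
  have := coeff_eq_mul_coeff_add_of_dvd (Nat.mul_pos hη (pow_pos hp.out.pos s))
    (ofFn_degree_lt c) hdvd (a := x) (by omega)
  simpa [hxy] using this

theorem hasAllSymbolLocality_Ci (hη : 0 < η) (ha : a ≠ 0) (hi : p ^ (s + 1) ≤ p ^ s + i)
    (hi' : i ≤ p ^ (s + 1)) : hasAllSymbolLocality (Ci p η (s + 1) i a) 1 :=
  hasAllSymbolLocality_one_of_apply_eq_mul_apply_add (N := p) (by ring) hp.out.two_le
    (Nat.mul_pos hη (pow_pos hp.out.pos s)) (pow_ne_zero _ ha)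
    (apply_eq_mul_apply_add_of_mem_Ci hi hi')

theorem toFn_mem_Ci [DecidableEq K] {P : K[X]} (hP : P.degree < (η * p ^ s : ℕ))
    (hi : i ≤ p ^ s) (hdvd : (X ^ η - C a) ^ i ∣ P) : toFn _ P ∈ Ci p η s i a := by
  rwa [Ci, mem_codeOfGen_iff (pow_dvd_X_pow_sub_C_of_le hi), ofFn_toFn_of_degree_lt hP]

theorem toFn_pow_mem_Ci [DecidableEq K] (hη : 0 < η) {e : ℕ} (hie : i ≤ e) (he : e < p ^ s) :
    toFn (η * p ^ s) ((X ^ η - C a) ^ e) ∈ Ci p η s i a ∧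
      toFn (η * p ^ s) ((X ^ η - C a) ^ e) ≠ 0 := by
  have hmonic : ((X ^ η - C a) ^ e).Monic := (monic_X_pow_sub_C a hη.ne').pow _
  have hdeg : ((X ^ η - C a) ^ e).degree < ((η * p ^ s : ℕ) : WithBot ℕ) := by
    rw [degree_eq_natDegree hmonic.ne_zero, natDegree_pow, natDegree_X_pow_sub_C, Nat.cast_lt,
      mul_comm _ η]
    exact Nat.mul_lt_mul_of_pos_left he hη
  refine ⟨toFn_mem_Ci hdeg (hie.trans he.le) (pow_dvd_pow _ hie), fun h => hmonic.ne_zero ?_⟩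
  rw [← ofFn_toFn_of_degree_lt hdeg, h, map_zero]

theorem exists_mem_Ci_hammingNorm_le [DecidableEq K] (hη : 0 < η) {L k u : ℕ}
    (hu : 1 ≤ u) (hup : u ≤ p) (hi : i + p ^ L * u ≤ p ^ (L + k + 1)) :
    ∃ c ∈ Ci p η (L + k + 1) i a, c ≠ 0 ∧ hammingNorm c ≤ (p - u + 1) * p ^ k := by
  have hpk : 1 ≤ p ^ k := Nat.one_le_pow _ _ hp.out.pos
  have he : (p - u) + p * (p ^ k - 1) + u = p ^ (k + 1) := by
    zify [hup, hpk]
    ring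
  set e := (p - u) + p * (p ^ k - 1)
  have hpe : p ^ L * e + p ^ L * u = p ^ (L + k + 1) := by
    rw [← Nat.mul_add, he, ← pow_add, add_assoc]
  have hpu : 0 < p ^ L * u := Nat.mul_pos (pow_pos hp.out.pos L) hu
  have hlt : p ^ L * e < p ^ (L + k + 1) := by omega
  obtain ⟨hc, hc0⟩ := toFn_pow_mem_Ci (a := a) hη (by omega : i ≤ p ^ L * e) hlt
  refine ⟨_, hc, hc0, ?_⟩
  calc hammingNorm (toFn _ _) ≤ ((X ^ η - C a) ^ (p ^ L * e)).support.card :=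
        hammingNorm_toFn_le _ _
    _ ≤ (p - u + 1) * (p ^ k - 1 + 1) := by
        rw [pow_mul, X_pow_sub_C_pow_char_pow]
        exact card_support_X_pow_sub_C_pow_add_mul_le _ _ _ _
    _ = (p - u + 1) * p ^ k := by rw [Nat.sub_add_cancel hpk]

theorem exists_minDistIs_eq_of_optimalLRC_Ci [Fintype K] [DecidableEq K] (hη : 0 < η)
    (ha : a ≠ 0) {j : ℕ} (hij : i + j = p ^ (s + 1)) (hj : 0 < j) (hjs : j ≤ p ^ s)
    (hopt : optimalLRC (Ci p η (s + 1) i a)) :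
    ∃ d, minDistIs (Ci p η (s + 1) i a) d ∧ (d : ℤ) = η * (p ^ (s + 1) - 2 * j) + 2 := by
  obtain ⟨dim, d, r, hdim, hd, hr, hbound⟩ := hopt
  have hdim : dim = η * j := by
    refine Nat.pow_right_injective Fintype.one_lt_card
      (hdim.symm.trans ((card_Ci hη (by omega)).trans ?_))
    rw [show p ^ (s + 1) - i = j by omega]
  obtain ⟨hc, hc0⟩ := toFn_pow_mem_Ci (p := p) (s := s + 1) (a := a) hη (le_refl i) (by omega)
  have hr : r = 1 := hr.unique <| minLocalityIs_one_of_hasAllSymbolLocality_one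
    (hasAllSymbolLocality_Ci hη ha (by omega) (by omega)) (zero_mem_codeOfGen _ _ _) hc hc0
  subst hdim hr
  refine ⟨d, hd, ?_⟩
  simp only [nceil, add_tsub_cancel_right, Nat.div_one] at hbound
  push_cast at hbound
  linarith

end ConstacyclicCode

theorem exists_pow_mul_le_lt_pow_mul_succ {p j : ℕ} (hp : 2 ≤ p) (hj : j ≠ 0) :
    ∃ L u, 1 ≤ u ∧ u < p ∧ p ^ L * u ≤ j ∧ j < p ^ L * (u + 1) := by
  have hB : 0 < p ^ Nat.log p j := pow_pos (by omega) _
  refine ⟨Nat.log p j, j / p ^ Nat.log p j, Nat.div_pos (Nat.pow_log_le_self p hj) hB,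
    (Nat.div_lt_iff_lt_mul hB).2 ?_, Nat.mul_div_le j _, Nat.lt_mul_div_succ j hB⟩
  rw [← pow_succ']
  exact Nat.lt_pow_succ_log_self (by omega) j

theorem eq_of_mul_sub_two_mul_add_two_le {p X B u j η : ℤ} (hu : 1 ≤ u) (hup : u < p)
    (hX : p ≤ X) (hB : 1 ≤ B) (hj : j < (u + 1) * B) (hη : 1 ≤ η)
    (hd : η * (p * X * B - 2 * j) + 2 ≤ (p - u + 1) * X) :
    η = 1 ∧ j = 2 * B - 1 ∧ (B = 1 ∨ p = 2 ∧ X = 2) := by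
  have hpB : (u + 1) * B ≤ p * B := by nlinarith
  have hS : 0 < p * X * B - 2 * j := by
    nlinarith [mul_le_mul_of_nonneg_right (show 2 ≤ X by linarith) (by nlinarith : 0 ≤ p * B)]
  have h₀ : 0 ≤ (η - 1) * (p * X * B - 2 * j) := mul_nonneg (by linarith) hS.le
  have h₁ : 0 ≤ (B - 1) * (p * X - 2 * (u + 1)) := mul_nonneg (by linarith) (by nlinarith)
  have h₂ : 0 ≤ (u - 1) * (X - 2) := mul_nonneg (by linarith) (by linarith)
  have key : (η - 1) * (p * X * B - 2 * j) + (B - 1) * (p * X - 2 * (u + 1)) + (u - 1) * (X - 2)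
      + 2 * ((u + 1) * B - 1 - j) ≤ 0 := by linear_combination hd
  have hη1 : η = 1 := by nlinarith
  have hj' : j = (u + 1) * B - 1 := by linarith
  have hB1 : (B - 1) * (p * X - 2 * (u + 1)) = 0 := by linarith
  have hu1 : (u - 1) * (X - 2) = 0 := by linarith
  rcases mul_eq_zero.1 hB1 with hB1 | hpX
  · have : u = 1 := by rcases mul_eq_zero.1 hu1 with h | h <;> linarith
    exact ⟨hη1, by subst this; linarith, .inl (by linarith)⟩
  · have hp2 : p = 2 := by nlinarith
    have hX2 : X = 2 := by nlinarith
    have : u = 1 := by linarith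
    exact ⟨hη1, by subst this; linarith, .inr ⟨hp2, hX2⟩⟩

theorem eq_of_mul_pow_sub_two_mul_add_two_le {p η i j L k u : ℕ} (hu : 1 ≤ u) (hup : u < p)
    (hk : 1 ≤ k) (hju : j < p ^ L * (u + 1)) (hη : 0 < η) (hij : i + j = p ^ (L + k + 1))
    (hd : (η : ℤ) * (p ^ (L + k + 1) - 2 * j) + 2 ≤ ((p - u + 1) * p ^ k : ℕ)) :
    η = 1 ∧ ((p = 2 ∧ i = 2 ^ (L + k) + 1) ∨ i = p ^ (L + k + 1) - 1) := by
  push_cast [Nat.cast_sub hup.le] at hd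
  rw [show (p : ℤ) ^ (L + k + 1) = p * p ^ k * p ^ L by ring] at hd
  obtain ⟨hη1, hj, hcases⟩ := eq_of_mul_sub_two_mul_add_two_le (by exact_mod_cast hu)
    (by exact_mod_cast hup) (by exact_mod_cast Nat.le_self_pow (by omega) p)
    (by exact_mod_cast Nat.one_le_pow _ _ (by omega))
    (by exact_mod_cast (by linarith : j < (u + 1) * p ^ L)) (by exact_mod_cast hη) hd
  refine ⟨by exact_mod_cast hη1, ?_⟩
  rcases hcases with hB | ⟨hp2, hX2⟩
  · rw [hB] at hj
    have : (j : ℤ) = 1 := by linarith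
    omega
  · obtain rfl : p = 2 := by exact_mod_cast hp2
    obtain rfl : k = 1 := Nat.pow_right_injective le_rfl (by exact_mod_cast hX2 : 2 ^ k = 2 ^ 1)
    have : j + 1 = 2 * 2 ^ L := by
      zify
      push_cast at hj
      linarith
    rw [pow_succ, pow_succ] at hij ⊢
    omega

theorem stmt19_general {p m : ℕ} (hp : p.Prime)
    {F : Type} [Field F] [Fintype F] [DecidableEq F] (hcard : Fintype.card F = p ^ m)
    (s : ℕ) (hs : 2 ≤ s) (η : ℕ) (hη : 0 < η)
    (lam0 : F) (hlam0 : lam0 ≠ 0)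
    (i : ℕ) (hi1 : p ^ s - p ^ (s - 1) + 1 ≤ i) (hi2 : i ≤ p ^ s - 1)
    (hopt : optimalLRC (Ci p η s i lam0)) :
    η = 1 ∧ ((p = 2 ∧ i = 2 ^ (s - 1) + 1) ∨ i = p ^ s - 1) := by
  have := Fact.mk hp
  have : CharP F p := charP_of_card_eq_prime_pow hcard
  obtain ⟨s, rfl⟩ : ∃ t, s = t + 1 := ⟨s - 1, by omega⟩
  rw [Nat.add_sub_cancel] at hi1 ⊢
  have hps : p ^ s ≤ p ^ (s + 1) := Nat.pow_le_pow_right hp.pos s.le_succ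
  obtain ⟨j, hij⟩ : ∃ j, i + j = p ^ (s + 1) := ⟨p ^ (s + 1) - i, by omega⟩
  have hjs : j < p ^ s := by omega
  obtain ⟨d, hd, hdeq⟩ :=
    exists_minDistIs_eq_of_optimalLRC_Ci hη hlam0 hij (by omega) hjs.le hopt
  obtain ⟨L, u, hu, hup, huj, hju⟩ :=
    exists_pow_mul_le_lt_pow_mul_succ hp.two_le (j := j) (by omega)
  have hLs : L < s := (Nat.pow_lt_pow_iff_right hp.one_lt).1
    ((Nat.le_mul_of_pos_right _ hu).trans_lt (huj.trans_lt hjs))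
  obtain ⟨k, rfl⟩ : ∃ k, s = L + k := ⟨s - L, by omega⟩
  obtain ⟨c, hc, hc0, hwt⟩ :=
    exists_mem_Ci_hammingNorm_le (i := i) (a := lam0) (L := L) (k := k) hη hu hup.le (by omega)
  have hdc : (d : ℤ) ≤ ((p - u + 1) * p ^ k : ℕ) := by
    exact_mod_cast (hd.2 ⟨c, hc, hc0, rfl⟩).trans hwt
  exact eq_of_mul_pow_sub_two_mul_add_two_le hu hup (by omega) hju hη hij (hdeq ▸ hdc)

/-- Suppose `x^η − λ₀` is irreducible over `F_{p^m}`, `s ≥ 2` and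
`p^s − p^{s−1} + 1 ≤ i ≤ p^s − 1`. If `C_i(η, p^s, λ₀)` is an optimal LRC, then `η = 1` and
either `p = 2` and `i = 2^{s−1} + 1`, or `i = p^s − 1`. -/
theorem stmt19 {p m : ℕ} (hp : p.Prime) (hm : 1 ≤ m)
    {F : Type} [Field F] [Fintype F] [DecidableEq F] (hcard : Fintype.card F = p ^ m)
    (s : ℕ) (hs : 2 ≤ s) (η : ℕ) (hη : 0 < η) (hcop : Nat.Coprime η p)
    (lam0 : F) (hlam0 : lam0 ≠ 0) (hirr : Irreducible (X ^ η - Polynomial.C lam0))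
    (i : ℕ) (hi1 : p ^ s - p ^ (s - 1) + 1 ≤ i) (hi2 : i ≤ p ^ s - 1)
    (hopt : optimalLRC (Ci p η s i lam0)) :
    η = 1 ∧ ((p = 2 ∧ i = 2 ^ (s - 1) + 1) ∨ i = p ^ s - 1) :=
  stmt19_general hp hcard s hs η hη lam0 hlam0 i hi1 hi2 hopt
end
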